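/- arXiv:2403.20318 — 3 statements merged into one kernel-verified Lean document; each statement's English description precedes it below -/
import Mathlib

section
/- Let η ~ N(0, σ²) with σ > 0 and ℓ > 0. Define the dice-loss gradient ε(η) = sign(η)/ℓ if |η| ≤ ℓ and ε(η) = 0 if |η| > ℓ. Then E[ε] = 0 and Var(ε) = (1/ℓ²)·Erf(ℓ/(√2 σ)). -/
/-!
The dice gradient is odd and the centred Gaussian is symmetric, so the mean vanishes. Off the
null set `{0}`, the square of the gradient is `1/ℓ²` times the indicator of `[-ℓ, ℓ]`, so the
variance is `1/ℓ²` times the Gaussian mass of `[-ℓ, ℓ]`; the substitution `x = √(2σ²) t` turns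
that mass into `erf (ℓ / (√2 σ))`.
-/

open ProbabilityTheory MeasureTheory

/-- The Gauss error function. -/
noncomputable def erf (x : ℝ) : ℝ := (2 / Real.sqrt Real.pi) * ∫ t in (0:ℝ)..x, Real.exp (-t ^ 2)

/-- The a.e. gradient of the dice loss: `sign(η)/ℓ` if `|η| ≤ ℓ`, else `0`. -/
noncomputable def diceGrad (ℓ η : ℝ) : ℝ := if |η| ≤ ℓ then Real.sign η / ℓ else 0

open Real Set
open scoped NNReal

theorem integral_eq_zero_of_odd {G E : Type*} [AddGroup G] [MeasurableSpace G] [MeasurableNeg G]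
    [NormedAddCommGroup E] [NormedSpace ℝ E] (μ : Measure G) [μ.IsNegInvariant] {f : G → E}
    (hf : ∀ x, f (-x) = -f x) : ∫ x, f x ∂μ = 0 := by
  have h := integral_neg_eq_self f μ
  simp only [hf, integral_neg] at h
  have h2 : (2 : ℝ) • ∫ x, f x ∂μ = 0 := by rw [two_smul]; nth_rw 1 [← h]; exact neg_add_cancel _
  exact (smul_eq_zero.mp h2).resolve_left two_ne_zero

instance isNegInvariant_gaussianReal_zero (v : ℝ≥0) : (gaussianReal 0 v).IsNegInvariant :=
  ⟨by simpa [Measure.neg_def] using gaussianReal_map_neg (μ := 0) (v := v)⟩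

theorem integral_exp_neg_sq_neg_self (a : ℝ) :
    ∫ t in -a..a, exp (-t ^ 2) = √π * erf a := by
  have hint (b c : ℝ) : IntervalIntegrable (fun t ↦ exp (-t ^ 2)) volume b c :=
    (by fun_prop : Continuous fun t : ℝ ↦ exp (-t ^ 2)).intervalIntegrable b c
  have hleft := intervalIntegral.integral_comp_neg (a := 0) (b := a) fun t ↦ exp (-t ^ 2)
  simp only [neg_sq, neg_zero] at hleft
  rw [← intervalIntegral.integral_add_adjacent_intervals (hint _ 0) (hint 0 _), ← hleft, erf]
  field_simp
  ring

theorem gaussianPDFReal_zero_apply (v : ℝ≥0) (x : ℝ) :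
    gaussianPDFReal 0 v x = (√π * √(2 * v))⁻¹ * exp (-(x / √(2 * v)) ^ 2) := by
  simp only [gaussianPDFReal, sub_zero]
  rw [mul_comm 2 π, mul_assoc, Real.sqrt_mul pi_nonneg, div_pow, Real.sq_sqrt (by positivity),
    neg_div]

theorem gaussianReal_real_Icc_neg_self {v : ℝ≥0} (hv : v ≠ 0) {a : ℝ} (ha : 0 ≤ a) :
    (gaussianReal 0 v).real (Icc (-a) a) = erf (a / √(2 * v)) := by
  have hc : √(2 * v) ≠ 0 := by positivity
  rw [measureReal_def, gaussianReal_apply_eq_integral 0 hv, ENNReal.toReal_ofReal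
    (integral_nonneg fun x ↦ gaussianPDFReal_nonneg 0 v x), integral_Icc_eq_integral_Ioc,
    ← intervalIntegral.integral_of_le (neg_le_self ha)]
  simp_rw [gaussianPDFReal_zero_apply]
  rw [intervalIntegral.integral_const_mul,
    intervalIntegral.integral_comp_div (fun t ↦ exp (-t ^ 2)) hc, neg_div,
    integral_exp_neg_sq_neg_self, smul_eq_mul]
  field_simp

theorem Real.measurable_sign : Measurable Real.sign :=
  Measurable.ite (measurableSet_lt measurable_id measurable_const) measurable_const
    (Measurable.ite (measurableSet_lt measurable_const measurable_id) measurable_const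
      measurable_const)

theorem measurable_diceGrad (ℓ : ℝ) : Measurable (diceGrad ℓ) :=
  Measurable.ite (measurableSet_le measurable_id.abs measurable_const)
    (Real.measurable_sign.div_const ℓ) measurable_const

theorem diceGrad_neg (ℓ x : ℝ) : diceGrad ℓ (-x) = -diceGrad ℓ x := by
  simp only [diceGrad, abs_neg, Real.sign_neg, neg_div]
  split <;> simp

theorem diceGrad_sq_of_ne_zero (ℓ : ℝ) {x : ℝ} (hx : x ≠ 0) :
    diceGrad ℓ x ^ 2 = (Icc (-ℓ) ℓ).indicator (fun _ ↦ (ℓ ^ 2)⁻¹) x := by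
  have hsign : Real.sign x ^ 2 = 1 := by
    rcases Real.sign_apply_eq_of_ne_zero x hx with h | h <;> simp [h]
  simp only [diceGrad, indicator_apply, mem_Icc, ← abs_le]
  split
  · rw [div_pow, hsign, one_div]
  · simp

theorem integral_diceGrad_sq (μ : Measure ℝ) [NullSingletonClass μ] (ℓ : ℝ) :
    ∫ x, diceGrad ℓ x ^ 2 ∂μ = μ.real (Icc (-ℓ) ℓ) / ℓ ^ 2 := by
  have hae : (fun x ↦ diceGrad ℓ x ^ 2) =ᵐ[μ] (Icc (-ℓ) ℓ).indicator (fun _ ↦ (ℓ ^ 2)⁻¹) := by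
    filter_upwards [μ.ae_ne 0] with x hx
    exact diceGrad_sq_of_ne_zero ℓ hx
  rw [integral_congr_ae hae, integral_indicator_const _ measurableSet_Icc, smul_eq_mul,
    div_eq_mul_inv]

theorem dice_gradient_mean_variance (σ ℓ : ℝ) (hσ : 0 < σ) (hℓ : 0 < ℓ) :
    (∫ x, diceGrad ℓ x ∂(gaussianReal 0 ⟨σ ^ 2, sq_nonneg σ⟩) = 0) ∧
    variance (diceGrad ℓ) (gaussianReal 0 ⟨σ ^ 2, sq_nonneg σ⟩) =
      (1 / ℓ ^ 2) * erf (ℓ / (Real.sqrt 2 * σ)) := by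
  set v : ℝ≥0 := ⟨σ ^ 2, sq_nonneg σ⟩
  have hv : v ≠ 0 := ne_of_gt (show (0 : ℝ) < σ ^ 2 by positivity)
  have := nullSingletonClass_gaussianReal (μ := 0) hv
  have hmean : ∫ x, diceGrad ℓ x ∂gaussianReal 0 v = 0 :=
    integral_eq_zero_of_odd _ (diceGrad_neg ℓ)
  have hsqrt : √(2 * (v : ℝ)) = √2 * σ := by
    rw [show (v : ℝ) = σ ^ 2 from rfl, Real.sqrt_mul zero_le_two, Real.sqrt_sq hσ.le]
  refine ⟨hmean, ?_⟩
  rw [variance_of_integral_eq_zero (measurable_diceGrad ℓ).aemeasurable hmean,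
    integral_diceGrad_sq, gaussianReal_real_Icc_neg_self hv hℓ.le, hsqrt]
  ring
end

section
/- For a standard normal random variable X and any x > 0, P(X > x) ≥ ((√(4 + x²) − x)/2) · (1/√(2π)) · e^{−x²/2}. -/
/-!
Let `φ(t) = exp (-t ^ 2 / 2)` and let `r(t) = (√(4 + t ^ 2) - t) / 2` be the positive root of
`r ^ 2 + t r = 1`. Then `r' = -r / √(4 + t ^ 2)`, and the algebraic inequality
`r / √(4 + t ^ 2) + t r ≤ 1` says exactly that `-(r φ)' ≤ φ`: the function `r` is a subsolution of
the Riccati equation `R' = t R - 1` solved by the Mills ratio. Integrating over `(x, ∞)`, where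
`r φ → 0`, gives `r(x) φ(x) ≤ ∫_x^∞ φ`; dividing by `√(2π)` is the claim.
-/

open ProbabilityTheory MeasureTheory

open Real Filter Set Topology

theorem sub_le_integral_Ioi_of_hasDerivAt_of_le {f f' g : ℝ → ℝ} {a m : ℝ}
    (hderiv : ∀ t ∈ Ici a, HasDerivAt f (f' t) t) (hg : IntegrableOn g (Ioi a))
    (hf'g : ∀ t ∈ Ioi a, f' t ≤ g t) (hf : Tendsto f atTop (𝓝 m)) :
    m - f a ≤ ∫ t in Ioi a, g t := by
  refine le_of_tendsto_of_tendsto (hf.sub_const (f a))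
    (intervalIntegral_tendsto_integral_Ioi a hg tendsto_id) ?_
  filter_upwards [eventually_ge_atTop a] with b hab
  exact intervalIntegral.sub_le_integral_of_hasDeriv_right_of_le hab
    (fun t ht => (hderiv t ht.1).continuousAt.continuousWithinAt)
    (fun t ht => (hderiv t (mem_Ici.2 ht.1.le)).hasDerivWithinAt)
    ((integrableOn_Icc_iff_integrableOn_Ioc (f := g)).2 (hg.mono_set Ioc_subset_Ioi_self))
    (fun t ht => hf'g t ht.1)

lemma tendsto_exp_neg_sq_div_two_atTop :
    Tendsto (fun t : ℝ => exp (-t ^ 2 / 2)) atTop (𝓝 0) := by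
  refine tendsto_exp_comp_nhds_zero.2 ?_
  simpa only [neg_div, Function.comp_def] using tendsto_neg_atTop_atBot.comp
    ((tendsto_pow_atTop two_ne_zero).atTop_div_const two_pos)

lemma integrable_exp_neg_sq_div_two : Integrable fun t : ℝ => exp (-t ^ 2 / 2) := by
  simpa [neg_div, div_eq_inv_mul] using integrable_exp_neg_mul_sq (b := 1 / 2) (by norm_num)

lemma gaussianPDFReal_zero_one (t : ℝ) :
    gaussianPDFReal 0 1 t = (√(2 * π))⁻¹ * exp (-t ^ 2 / 2) := by
  simp [gaussianPDFReal]

noncomputable def birnbaumRatio (t : ℝ) : ℝ := (√(4 + t ^ 2) - t) / 2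

lemma birnbaumRatio_pos (t : ℝ) : 0 < birnbaumRatio t := by
  have hs2 : √(4 + t ^ 2) ^ 2 = 4 + t ^ 2 := sq_sqrt (by positivity)
  have hs : 0 < √(4 + t ^ 2) := by positivity
  unfold birnbaumRatio
  nlinarith

lemma birnbaumRatio_le_one {t : ℝ} (ht : 0 ≤ t) : birnbaumRatio t ≤ 1 := by
  have hs2 : √(4 + t ^ 2) ^ 2 = 4 + t ^ 2 := sq_sqrt (by positivity)
  have hs : 0 < √(4 + t ^ 2) := by positivity
  unfold birnbaumRatio
  nlinarith

lemma hasDerivAt_birnbaumRatio (t : ℝ) :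
    HasDerivAt birnbaumRatio (-(birnbaumRatio t / √(4 + t ^ 2))) t := by
  have hsq : HasDerivAt (fun t : ℝ => 4 + t ^ 2) (2 * t) t := by
    simpa using (hasDerivAt_pow 2 t).const_add 4
  refine (((hsq.sqrt (by positivity)).sub (hasDerivAt_id t)).div_const 2).congr_deriv ?_
  have hs : 0 < √(4 + t ^ 2) := by positivity
  unfold birnbaumRatio
  field_simp
  ring

lemma birnbaumRatio_div_add_mul_le_one (t : ℝ) :
    birnbaumRatio t / √(4 + t ^ 2) + t * birnbaumRatio t ≤ 1 := by
  have hs2 : √(4 + t ^ 2) ^ 2 = 4 + t ^ 2 := sq_sqrt (by positivity)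
  have hs : 0 < √(4 + t ^ 2) := by positivity
  unfold birnbaumRatio
  set s := √(4 + t ^ 2)
  have key : t * (t ^ 2 + 3) ≤ s * (t ^ 2 + 1) := by
    have hdiff : (s * (t ^ 2 + 1)) ^ 2 = (t * (t ^ 2 + 3)) ^ 2 + 4 := by
      rw [mul_pow, hs2]; ring
    nlinarith [(show 0 < s * (t ^ 2 + 1) by positivity)]
  have hts : t * s ^ 2 = t * (4 + t ^ 2) := by rw [hs2]
  rw [div_add' _ _ _ hs.ne', div_le_one hs]
  nlinarith

lemma tendsto_birnbaumRatio_mul_exp_atTop :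
    Tendsto (fun t => birnbaumRatio t * exp (-t ^ 2 / 2)) atTop (𝓝 0) := by
  refine squeeze_zero' ?_ ?_ tendsto_exp_neg_sq_div_two_atTop
  · exact Eventually.of_forall fun t => (mul_pos (birnbaumRatio_pos t) (exp_pos _)).le
  · filter_upwards [eventually_ge_atTop 0] with t ht
    exact mul_le_of_le_one_left (exp_nonneg _) (birnbaumRatio_le_one ht)

lemma birnbaumRatio_mul_exp_le_integral_Ioi (x : ℝ) :
    birnbaumRatio x * exp (-x ^ 2 / 2) ≤ ∫ t in Ioi x, exp (-t ^ 2 / 2) := by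
  have hderiv (t : ℝ) : HasDerivAt (fun t => -(birnbaumRatio t * exp (-t ^ 2 / 2)))
      ((birnbaumRatio t / √(4 + t ^ 2) + t * birnbaumRatio t) * exp (-t ^ 2 / 2)) t := by
    have hq : HasDerivAt (fun t : ℝ => -t ^ 2 / 2) (-(2 * t) / 2) t := by
      simpa using (hasDerivAt_pow 2 t).neg.div_const 2
    refine ((hasDerivAt_birnbaumRatio t).mul hq.exp).neg.congr_deriv ?_
    ring
  simpa using sub_le_integral_Ioi_of_hasDerivAt_of_le (fun t _ => hderiv t)
    integrable_exp_neg_sq_div_two.integrableOn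
    (fun t _ => mul_le_of_le_one_left (exp_nonneg _) (birnbaumRatio_div_add_mul_le_one t))
    tendsto_birnbaumRatio_mul_exp_atTop.neg

theorem birnbaum_gaussian_tail_lower_bound_general (x : ℝ) :
    ENNReal.ofReal
        ((Real.sqrt (4 + x ^ 2) - x) / 2 * (1 / Real.sqrt (2 * Real.pi)) *
          Real.exp (-x ^ 2 / 2)) ≤
      (gaussianReal 0 1) {y : ℝ | x < y} := by
  change _ ≤ gaussianReal 0 1 (Ioi x)
  rw [gaussianReal_apply_eq_integral 0 one_ne_zero]
  refine ENNReal.ofReal_le_ofReal ?_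
  simp_rw [gaussianPDFReal_zero_one, integral_const_mul]
  calc (√(4 + x ^ 2) - x) / 2 * (1 / √(2 * π)) * exp (-x ^ 2 / 2)
      = (√(2 * π))⁻¹ * (birnbaumRatio x * exp (-x ^ 2 / 2)) := by
        rw [birnbaumRatio]; ring
    _ ≤ (√(2 * π))⁻¹ * ∫ t in Ioi x, exp (-t ^ 2 / 2) := by
        gcongr; exact birnbaumRatio_mul_exp_le_integral_Ioi x

/-- Birnbaum's lower bound on the Gaussian tail probability: for `X ~ N(0,1)` and `x > 0`,
`P(X > x) ≥ ((√(4+x²) − x)/2) · (1/√(2π)) · e^{−x²/2}`. -/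
theorem birnbaum_gaussian_tail_lower_bound (x : ℝ) (hx : 0 < x) :
    ENNReal.ofReal
        ((Real.sqrt (4 + x ^ 2) - x) / 2 * (1 / Real.sqrt (2 * Real.pi)) *
          Real.exp (-x ^ 2 / 2)) ≤
      (gaussianReal 0 1) {y : ℝ | x < y} :=
  birnbaum_gaussian_tail_lower_bound_general x
end

section
/- Fix σ > 0. The function g(ℓ) = (1/ℓ²)·Erf(ℓ/(√2 σ)) is strictly decreasing on (0, ∞). That is, for 0 < ℓ₁ < ℓ₂, we have (1/ℓ₂²)·Erf(ℓ₂/(√2σ)) < (1/ℓ₁²)·Erf(ℓ₁/(√2σ)). -/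
open Set MeasureTheory intervalIntegral

namespace AntitoneOn

variable {f : ℝ → ℝ}

theorem intervalIntegrable_zero (hf : AntitoneOn f (Ici 0)) {a : ℝ} (ha : 0 ≤ a) :
    IntervalIntegrable f volume 0 a :=
  (hf.mono (by rw [uIcc_of_le ha]; exact Icc_subset_Ici_self)).intervalIntegrable

theorem comp_mul_left (hf : AntitoneOn f (Ici 0)) {c : ℝ} (hc : 0 ≤ c) :
    AntitoneOn (fun s => f (c * s)) (Ici 0) := fun _ hx _ hy hxy =>
  hf (mul_nonneg hc hx) (mul_nonneg hc hy) (mul_le_mul_of_nonneg_left hxy hc)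

theorem antitoneOn_integral_div (hf : AntitoneOn f (Ici 0)) :
    AntitoneOn (fun x => (∫ t in (0:ℝ)..x, f t) / x) (Ioi 0) := by
  intro a (ha : 0 < a) b (hb : 0 < b) hab
  have hscale : 0 < b / a := div_pos hb ha
  -- substitute `t = (b / a) s` to bring `∫₀ᵇ f` back to `[0, a]`
  have hsubst : ∫ s in (0:ℝ)..a, f (b / a * s) = a / b * ∫ t in (0:ℝ)..b, f t := by
    rw [integral_comp_mul_left f hscale.ne', mul_zero, div_mul_cancel₀ _ ha.ne', smul_eq_mul,
      inv_div]
  have hmono : ∫ s in (0:ℝ)..a, f (b / a * s) ≤ ∫ s in (0:ℝ)..a, f s :=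
    integral_mono_on ha.le ((hf.comp_mul_left hscale.le).intervalIntegrable_zero ha.le)
      (hf.intervalIntegrable_zero ha.le) fun s hs =>
        hf hs.1 (mul_nonneg hscale.le hs.1) (le_mul_of_one_le_left hs.1 ((one_le_div ha).2 hab))
  rw [le_div_iff₀ ha]
  calc (∫ t in (0:ℝ)..b, f t) / b * a = a / b * ∫ t in (0:ℝ)..b, f t := by ring
    _ ≤ ∫ t in (0:ℝ)..a, f t := hsubst ▸ hmono

theorem strictAntiOn_integral_div_sq (hf : AntitoneOn f (Ici 0))
    (hpos : ∀ x, 0 < x → 0 < f x) :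
    StrictAntiOn (fun x => (∫ t in (0:ℝ)..x, f t) / x ^ 2) (Ioi 0) := by
  intro a (ha : 0 < a) b (hb : 0 < b) hab
  have hint_pos : 0 < ∫ t in (0:ℝ)..a, f t :=
    intervalIntegral_pos_of_pos_on (hf.intervalIntegrable_zero ha.le) (fun x hx => hpos x hx.1) ha
  calc (∫ t in (0:ℝ)..b, f t) / b ^ 2 = (∫ t in (0:ℝ)..b, f t) / b / b := by ring
    _ ≤ (∫ t in (0:ℝ)..a, f t) / a / b :=
      div_le_div_of_nonneg_right (hf.antitoneOn_integral_div ha hb hab.le) hb.le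
    _ < (∫ t in (0:ℝ)..a, f t) / a / a := by gcongr
    _ = (∫ t in (0:ℝ)..a, f t) / a ^ 2 := by ring

end AntitoneOn

theorem antitoneOn_exp_neg_sq : AntitoneOn (fun t : ℝ => Real.exp (-t ^ 2)) (Ici 0) :=
  fun _ hx _ _ hxy => Real.exp_le_exp.2 (neg_le_neg (pow_le_pow_left₀ hx hxy 2))

/-- The dice-loss gradient variance `ℓ ↦ (1/ℓ²) Erf(ℓ/(√2 σ))` is strictly decreasing in the
object length `ℓ` on `(0, ∞)`. -/
theorem dice_variance_strictAnti_in_length (σ : ℝ) (hσ : 0 < σ) :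
    ∀ ℓ₁ ℓ₂ : ℝ, 0 < ℓ₁ → ℓ₁ < ℓ₂ →
      (1 / ℓ₂ ^ 2) * erf (ℓ₂ / (Real.sqrt 2 * σ)) <
        (1 / ℓ₁ ^ 2) * erf (ℓ₁ / (Real.sqrt 2 * σ)) := by
  intro ℓ₁ ℓ₂ h₁ h₁₂
  set c := Real.sqrt 2 * σ
  have hc : 0 < c := by positivity
  have hquot := antitoneOn_exp_neg_sq.strictAntiOn_integral_div_sq (fun x _ => Real.exp_pos _)
    (div_pos h₁ hc) (div_pos (h₁.trans h₁₂) hc) (div_lt_div_of_pos_right h₁₂ hc)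
  have hrescale : ∀ ℓ : ℝ, 0 < ℓ → (1 / ℓ ^ 2) * erf (ℓ / c) =
      2 / Real.sqrt Real.pi / c ^ 2 * ((∫ t in (0:ℝ)..ℓ / c, Real.exp (-t ^ 2)) / (ℓ / c) ^ 2) := by
    intro ℓ hℓ
    unfold erf
    field_simp
  rw [hrescale ℓ₁ h₁, hrescale ℓ₂ (h₁.trans h₁₂)]
  exact mul_lt_mul_of_pos_left hquot (by positivity)
end
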